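/- Let H be a complex Hilbert space with dim H ≥ 2. Every H-class of valuations makes conjunction truth-functional — indeed in every H-class 𝓒, every v ∈ 𝓒 satisfies v(a∧b) = t iff v(a) = v(b) = t — but every H-class makes negation and disjunction non-truth-functional. -/

import Mathlib

/-- Sentences generated from a countably infinite set of atoms by `∧`, `∨`, `¬`. -/
inductive Sentence : Type where
  | atom : ℕ → Sentence
  | conj : Sentence → Sentence → Sentence
  | disj : Sentence → Sentence → Sentence
  | neg  : Sentence → Sentence

/-- A (bivalent) valuation: `true` = t, `false` = f. -/
abbrev SentVal : Type := Sentence → Bool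

/-- An interpretation: a homomorphism of the language into the algebra of
closed subspaces of `H`, with `∧` as intersection, `∨` as closed linear span
and `¬` as orthogonal complement. -/
structure Interp (H : Type*) [NormedAddCommGroup H] [InnerProductSpace ℂ H]
    [CompleteSpace H] : Type _ where
  toFun : Sentence → Submodule ℂ H
  closed : ∀ a, IsClosed (toFun a : Set H)
  map_conj : ∀ a b, toFun (Sentence.conj a b) = toFun a ⊓ toFun b
  map_disj : ∀ a b, toFun (Sentence.disj a b) = (toFun a ⊔ toFun b).topologicalClosure
  map_neg : ∀ a, toFun (Sentence.neg a) = (toFun a)ᗮ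

/-- `CstarH H`: the class of valuations `v^{(i)}_P`, for interpretations `i` and
1-dimensional subspaces `P`, where `v^{(i)}_P a = t` iff `P ⊆ i a`. -/
def CstarH (H : Type*) [NormedAddCommGroup H] [InnerProductSpace ℂ H] [CompleteSpace H] :
    Set SentVal :=
  { v | ∃ (i : Interp H) (P : Submodule ℂ H), Module.finrank ℂ P = 1 ∧
      ∀ a, (v a = true ↔ P ≤ i.toFun a) }

/-- Quantum-logical consequence `Γ ⊨_H a`. -/
def QLconseq (H : Type*) [NormedAddCommGroup H] [InnerProductSpace ℂ H] [CompleteSpace H]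
    (Γ : Set Sentence) (a : Sentence) : Prop :=
  ∀ v ∈ CstarH H, (∀ γ ∈ Γ, v γ = true) → v a = true

/-- An `H`-class: any class of valuations determining exactly `⊨_H`. -/
def IsHClass (H : Type*) [NormedAddCommGroup H] [InnerProductSpace ℂ H] [CompleteSpace H]
    (C : Set SentVal) : Prop :=
  ∀ (Γ : Set Sentence) (a : Sentence),
    QLconseq H Γ a ↔ (∀ v ∈ C, (∀ γ ∈ Γ, v γ = true) → v a = true)

/-- A class of valuations makes a binary connective truth-functional. -/
def MakesBinTF (C : Set SentVal) (op : Sentence → Sentence → Sentence) : Prop :=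
  ∃ f : Bool → Bool → Bool, ∀ v ∈ C, ∀ a b, v (op a b) = f (v a) (v b)

/-- A class of valuations makes negation truth-functional. -/
def MakesNegTF (C : Set SentVal) : Prop :=
  ∃ f : Bool → Bool, ∀ v ∈ C, ∀ a, v (Sentence.neg a) = f (v a)

namespace Stmt5Aux

open Submodule

variable {H : Type*} [NormedAddCommGroup H] [InnerProductSpace ℂ H] [CompleteSpace H]

noncomputable def mkToFun (g : ℕ → Submodule ℂ H) : Sentence → Submodule ℂ H
  | .atom n => g n
  | .conj a b => mkToFun g a ⊓ mkToFun g b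
  | .disj a b => (mkToFun g a ⊔ mkToFun g b).topologicalClosure
  | .neg a => (mkToFun g a)ᗮ

noncomputable def mkInterp (g : ℕ → Submodule ℂ H) (hg : ∀ n, IsClosed ((g n : Submodule ℂ H) : Set H)) :
    Interp H where
  toFun := mkToFun g
  closed := by
    intro a
    induction a with
    | atom n => exact hg n
    | conj a b ha hb => rw [mkToFun, Submodule.coe_inf]; exact ha.inter hb
    | disj a b _ _ => exact (mkToFun g a ⊔ mkToFun g b).isClosed_topologicalClosure
    | neg a _ => exact Submodule.isClosed_orthogonal _
  map_conj := fun _ _ => rfl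
  map_disj := fun _ _ => rfl
  map_neg := fun _ => rfl

noncomputable def valOf (i : Interp H) (P : Submodule ℂ H) : SentVal :=
  fun a => @decide (P ≤ i.toFun a) (Classical.propDecidable _)

lemma valOf_iff (i : Interp H) (P : Submodule ℂ H) (a : Sentence) :
    valOf i P a = true ↔ P ≤ i.toFun a := by
  simp [valOf]

lemma valOf_mem (i : Interp H) {x : H} (hx : x ≠ 0) :
    valOf i (span ℂ {x}) ∈ CstarH H :=
  ⟨i, span ℂ {x}, finrank_span_singleton hx, fun a => valOf_iff i _ a⟩

lemma QL_conj_intro (a b : Sentence) : QLconseq H {a, b} (a.conj b) := by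
  rintro v ⟨i, P, _, hv⟩ hΓ
  rw [hv, i.map_conj, le_inf_iff]
  exact ⟨(hv a).mp (hΓ a (by simp)), (hv b).mp (hΓ b (by simp))⟩

lemma QL_conj_left (a b : Sentence) : QLconseq H {a.conj b} a := by
  rintro v ⟨i, P, _, hv⟩ hΓ
  have h := (hv _).mp (hΓ (a.conj b) rfl)
  rw [i.map_conj, le_inf_iff] at h
  exact (hv a).mpr h.1

lemma QL_conj_right (a b : Sentence) : QLconseq H {a.conj b} b := by
  rintro v ⟨i, P, _, hv⟩ hΓ
  have h := (hv _).mp (hΓ (a.conj b) rfl)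
  rw [i.map_conj, le_inf_iff] at h
  exact (hv b).mpr h.2

lemma QL_noncontradiction (a : Sentence) : QLconseq H ∅ (Sentence.neg (a.conj a.neg)) := by
  rintro v ⟨i, P, _, hv⟩ _
  rw [hv, i.map_neg, i.map_conj, i.map_neg, (Submodule.orthogonal_disjoint _).eq_bot,
    Submodule.bot_orthogonal_eq_top]
  exact le_top

lemma QL_excluded_middle (a : Sentence) : QLconseq H ∅ (a.disj a.neg) := by
  rintro v ⟨i, P, _, hv⟩ _
  rw [hv, i.map_disj, i.map_neg]
  haveI : CompleteSpace (i.toFun a) := (i.closed a).completeSpace_coe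
  rw [Submodule.sup_orthogonal_of_hasOrthogonalProjection,
    IsClosed.submodule_topologicalClosure_eq (by rw [Submodule.top_coe]; exact isClosed_univ)]
  exact le_top

lemma QL_disj_left (a b : Sentence) : QLconseq H {a} (a.disj b) := by
  rintro v ⟨i, P, _, hv⟩ hΓ
  rw [hv, i.map_disj]
  exact ((hv a).mp (hΓ a rfl)).trans (le_sup_left.trans (Submodule.le_topologicalClosure _))

lemma QL_disj_right (a b : Sentence) : QLconseq H {b} (a.disj b) := by
  rintro v ⟨i, P, _, hv⟩ hΓ
  rw [hv, i.map_disj]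
  exact ((hv b).mp (hΓ b rfl)).trans (le_sup_right.trans (Submodule.le_topologicalClosure _))

section Vectors

variable {e₁ e₂ : H}

lemma not_span_le_bot (he₁ : e₁ ≠ 0) : ¬ (span ℂ {e₁} ≤ (⊥ : Submodule ℂ H)) := fun h =>
  he₁ ((Submodule.mem_bot ℂ).mp (h (Submodule.mem_span_singleton_self e₁)))

lemma not_span_le_orth (he₁ : e₁ ≠ 0) : ¬ (span ℂ {e₁} ≤ (span ℂ {e₁})ᗮ) := fun h =>
  he₁ (inner_self_eq_zero.mp ((Submodule.mem_orthogonal _ _).mp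
    (h (Submodule.mem_span_singleton_self e₁)) e₁ (Submodule.mem_span_singleton_self e₁)))

lemma inf_span_eq_bot (he₂ : e₂ ≠ 0) (horth : (inner ℂ e₁ e₂ : ℂ) = 0) :
    span ℂ {e₁} ⊓ span ℂ {e₁ + e₂} = ⊥ := by
  rw [eq_bot_iff]
  intro x hx
  obtain ⟨hx1, hx2⟩ := Submodule.mem_inf.mp hx
  obtain ⟨c, hc⟩ := Submodule.mem_span_singleton.mp hx1
  obtain ⟨d, hd⟩ := Submodule.mem_span_singleton.mp hx2
  have h2 : (inner ℂ e₂ e₁ : ℂ) = 0 := inner_eq_zero_symm.mp horth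
  have hx0 : (inner ℂ e₂ x : ℂ) = 0 := by rw [← hc, inner_smul_right, h2, mul_zero]
  rw [← hd, inner_smul_right, inner_add_right, h2, zero_add] at hx0
  rcases mul_eq_zero.mp hx0 with h | h
  · rw [Submodule.mem_bot, ← hd, h, zero_smul]
  · exact absurd (inner_self_eq_zero.mp h) he₂

lemma inf_orth_eq_bot (he₁ : e₁ ≠ 0) (horth : (inner ℂ e₁ e₂ : ℂ) = 0) :
    span ℂ {e₁} ⊓ (span ℂ {e₁ + e₂})ᗮ = ⊥ := by
  rw [eq_bot_iff]
  intro x hx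
  obtain ⟨hx1, hx2⟩ := Submodule.mem_inf.mp hx
  obtain ⟨c, hc⟩ := Submodule.mem_span_singleton.mp hx1
  have h := (Submodule.mem_orthogonal _ _).mp hx2 (e₁ + e₂) (Submodule.mem_span_singleton_self _)
  rw [← hc, inner_smul_right, inner_add_left,
    inner_eq_zero_symm.mp horth, add_zero] at h
  rcases mul_eq_zero.mp h with h0 | h0
  · rw [Submodule.mem_bot, ← hc, h0, zero_smul]
  · exact absurd (inner_self_eq_zero.mp h0) he₁

end Vectors

end Stmt5Aux

open Stmt5Aux Submodule

/-- for `dim H ≥ 2`, every `H`-class makes conjunction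
truth-functional (indeed classically: `v (a ∧ b) = t` iff `v a = v b = t`),
but makes negation and disjunction non-truth-functional. -/
theorem stmt_5 (H : Type*) [NormedAddCommGroup H] [InnerProductSpace ℂ H]
    [CompleteSpace H] (hdim : 2 ≤ Module.rank ℂ H) :
    ∀ C : Set SentVal, IsHClass H C →
      MakesBinTF C Sentence.conj ∧
      (∀ v ∈ C, ∀ a b, (v (Sentence.conj a b) = true ↔ (v a = true ∧ v b = true))) ∧
      ¬ MakesNegTF C ∧
      ¬ MakesBinTF C Sentence.disj := by
  intro C hC
  -- the two orthogonal nonzero vectors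
  obtain ⟨e₁, he₁⟩ : ∃ x : H, x ≠ 0 := by
    rw [← rank_pos_iff_exists_ne_zero (R := ℂ)]
    exact lt_of_lt_of_le (by norm_num) hdim
  obtain ⟨e₂, he₂mem, he₂⟩ : ∃ y : H, y ∈ (span ℂ {e₁})ᗮ ∧ y ≠ 0 := by
    by_contra hcon
    push_neg at hcon
    have hbot : (span ℂ {e₁})ᗮ = ⊥ := by
      rw [eq_bot_iff]; intro x hx; rw [Submodule.mem_bot]; exact hcon x hx
    have hcl : IsClosed ((span ℂ {e₁} : Submodule ℂ H) : Set H) :=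
      (span ℂ {e₁}).closed_of_finiteDimensional
    haveI : CompleteSpace (span ℂ {e₁}) := hcl.completeSpace_coe
    have htop : span ℂ {e₁} = ⊤ := by
      rw [← (span ℂ {e₁}).orthogonal_orthogonal, hbot, Submodule.bot_orthogonal_eq_top]
    have hle : Module.rank ℂ H ≤ 1 := by
      rw [← rank_top ℂ H, ← htop]
      simpa using rank_span_le (R := ℂ) {e₁}
    exact absurd (hdim.trans hle) (by norm_num)
  have horth : (inner ℂ e₁ e₂ : ℂ) = 0 :=
    (Submodule.mem_orthogonal _ _).mp he₂mem e₁ (Submodule.mem_span_singleton_self e₁)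
  have hee : e₁ + e₂ ≠ 0 := by
    intro h
    have : e₂ = -e₁ := by rw [eq_neg_iff_add_eq_zero, add_comm]; exact h
    rw [this, inner_neg_right, neg_eq_zero, inner_self_eq_zero] at horth
    exact he₁ horth
  set A : Submodule ℂ H := span ℂ {e₁} with hA
  set B : Submodule ℂ H := span ℂ {e₁ + e₂} with hB
  have hAcl : IsClosed (A : Set H) := A.closed_of_finiteDimensional
  have hBcl : IsClosed (B : Set H) := B.closed_of_finiteDimensional
  have hbotcl : IsClosed ((⊥ : Submodule ℂ H) : Set H) :=
    (⊥ : Submodule ℂ H).closed_of_finiteDimensional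
  -- classical conjunction
  have hconj : ∀ v ∈ C, ∀ a b,
      (v (Sentence.conj a b) = true ↔ (v a = true ∧ v b = true)) := by
    intro v hv a b
    constructor
    · intro h
      refine ⟨(hC {a.conj b} a).mp (QL_conj_left a b) v hv ?_,
        (hC {a.conj b} b).mp (QL_conj_right a b) v hv ?_⟩ <;>
        · intro γ hγ; rw [Set.mem_singleton_iff] at hγ; subst hγ; exact h
    · rintro ⟨h1, h2⟩
      refine (hC {a, b} (a.conj b)).mp (QL_conj_intro a b) v hv ?_
      intro γ hγ
      rcases hγ with rfl | hγ
      · exact h1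
      · rw [Set.mem_singleton_iff] at hγ; subst hγ; exact h2
  -- witness extraction
  have witness : ∀ (Γ : Set Sentence) (a : Sentence), ¬ QLconseq H Γ a →
      ∃ v ∈ C, (∀ γ ∈ Γ, v γ = true) ∧ v a = false := by
    intro Γ a h
    have h2 := mt (hC Γ a).mpr h
    push_neg at h2
    obtain ⟨v, hv, hΓ, ha⟩ := h2
    exact ⟨v, hv, hΓ, Bool.eq_false_iff.mpr ha⟩
  refine ⟨?_, hconj, ?_, ?_⟩
  · -- conjunction TF
    refine ⟨Bool.and, fun v hv a b => ?_⟩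
    have h := hconj v hv a b
    cases hab : v (Sentence.conj a b) <;> cases ha : v a <;> cases hb : v b <;> simp_all
  · -- negation not TF
    rintro ⟨f, hf⟩
    -- f true = false
    have hn1 : ¬ QLconseq H {Sentence.atom 0} (Sentence.neg (Sentence.atom 0)) := by
      intro h
      have hm := h (valOf (mkInterp (fun _ => A) (fun _ => hAcl)) A) (valOf_mem _ he₁)
        (fun γ hγ => by
          rw [Set.mem_singleton_iff] at hγ; subst hγ
          exact (valOf_iff _ _ _).mpr (le_refl A))
      rw [valOf_iff] at hm
      exact not_span_le_orth he₁ hm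
    obtain ⟨v1, hv1, hv1Γ, hv1f⟩ := witness _ _ hn1
    have hv1a : v1 (Sentence.atom 0) = true := hv1Γ _ rfl
    have hft : f true = false := by rw [← hv1a, ← hf v1 hv1, hv1f]
    -- f false = true
    have hff : f false = true := by
      have hX : v1 (Sentence.conj (Sentence.atom 0) (Sentence.neg (Sentence.atom 0))) = false := by
        cases hX : v1 (Sentence.conj (Sentence.atom 0) (Sentence.neg (Sentence.atom 0))) with
        | false => rfl
        | true =>
          have := ((hconj v1 hv1 _ _).mp hX).2
          rw [this] at hv1f; exact absurd hv1f (by simp)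
      have hnX := (hC ∅ _).mp (QL_noncontradiction (Sentence.atom 0)) v1 hv1 (by simp)
      rw [hf v1 hv1, hX] at hnX
      exact hnX
    -- the quantum witness refuting f = not
    have hn5 : ¬ QLconseq H
        {Sentence.neg (Sentence.conj (Sentence.atom 0) (Sentence.atom 1)),
         Sentence.neg (Sentence.conj (Sentence.atom 0) (Sentence.neg (Sentence.atom 1)))}
        (Sentence.neg (Sentence.atom 0)) := by
      intro h
      have hg : ∀ n, IsClosed (((fun n => if n = 0 then A else B) n : Submodule ℂ H) : Set H) := by
        intro n; by_cases hn : n = 0 <;> simp [hn, hAcl, hBcl]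
      have hm := h (valOf (mkInterp (fun n => if n = 0 then A else B) hg) A) (valOf_mem _ he₁)
        (fun γ hγ => by
          rcases hγ with rfl | hγ
          · rw [valOf_iff]
            show A ≤ (A ⊓ B)ᗮ
            rw [hA, hB, inf_span_eq_bot he₂ horth, Submodule.bot_orthogonal_eq_top]
            exact le_top
          · rw [Set.mem_singleton_iff] at hγ; subst hγ
            rw [valOf_iff]
            show A ≤ (A ⊓ Bᗮ)ᗮ
            rw [hA, hB, inf_orth_eq_bot he₁ horth, Submodule.bot_orthogonal_eq_top]
            exact le_top)
      rw [valOf_iff] at hm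
      exact not_span_le_orth he₁ hm
    obtain ⟨v5, hv5, hv5Γ, hv5f⟩ := witness _ _ hn5
    have h51 : v5 (Sentence.neg (Sentence.conj (Sentence.atom 0) (Sentence.atom 1))) = true :=
      hv5Γ _ (Or.inl rfl)
    have h52 : v5 (Sentence.neg (Sentence.conj (Sentence.atom 0)
        (Sentence.neg (Sentence.atom 1)))) = true := hv5Γ _ (Or.inr rfl)
    -- v5 atom0 = true
    have h5a : v5 (Sentence.atom 0) = true := by
      cases h : v5 (Sentence.atom 0) with
      | true => rfl
      | false =>
        rw [hf v5 hv5, h, hff] at hv5f; exact absurd hv5f (by simp)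
    -- v5 (conj a0 a1) = false
    have h5c1 : v5 (Sentence.conj (Sentence.atom 0) (Sentence.atom 1)) = false := by
      cases h : v5 (Sentence.conj (Sentence.atom 0) (Sentence.atom 1)) with
      | false => rfl
      | true => rw [hf v5 hv5, h, hft] at h51; exact absurd h51 (by simp)
    have h5c2 : v5 (Sentence.conj (Sentence.atom 0) (Sentence.neg (Sentence.atom 1))) = false := by
      cases h : v5 (Sentence.conj (Sentence.atom 0) (Sentence.neg (Sentence.atom 1))) with
      | false => rfl
      | true => rw [hf v5 hv5, h, hft] at h52; exact absurd h52 (by simp)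
    have h5b : v5 (Sentence.atom 1) = false := by
      cases h : v5 (Sentence.atom 1) with
      | false => rfl
      | true =>
        rw [(hconj v5 hv5 _ _).mpr ⟨h5a, h⟩] at h5c1; exact absurd h5c1 (by simp)
    have h5nb : v5 (Sentence.neg (Sentence.atom 1)) = true := by
      rw [hf v5 hv5, h5b, hff]
    rw [(hconj v5 hv5 _ _).mpr ⟨h5a, h5nb⟩] at h5c2
    exact absurd h5c2 (by simp)
  · -- disjunction not TF
    rintro ⟨f, hf⟩
    have hdL : ∀ v ∈ C, ∀ a b : Sentence, v a = true → v (a.disj b) = true := by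
      intro v hv a b h
      exact (hC {a} _).mp (QL_disj_left a b) v hv
        (fun γ hγ => by rw [Set.mem_singleton_iff] at hγ; subst hγ; exact h)
    have hdR : ∀ v ∈ C, ∀ a b : Sentence, v b = true → v (a.disj b) = true := by
      intro v hv a b h
      exact (hC {b} _).mp (QL_disj_right a b) v hv
        (fun γ hγ => by rw [Set.mem_singleton_iff] at hγ; subst hγ; exact h)
    have hEM : ∀ v ∈ C, v ((Sentence.atom 0).disj (Sentence.atom 0).neg) = true :=
      fun v hv => (hC ∅ _).mp (QL_excluded_middle _) v hv (by simp)
    have hn6 : ¬ QLconseq H {Sentence.atom 1}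
        (Sentence.disj (Sentence.conj (Sentence.atom 1) (Sentence.atom 0))
          (Sentence.conj (Sentence.atom 1) (Sentence.neg (Sentence.atom 0)))) := by
      intro h
      have hg : ∀ n, IsClosed (((fun n => if n = 0 then B else A) n : Submodule ℂ H) : Set H) := by
        intro n; by_cases hn : n = 0 <;> simp [hn, hAcl, hBcl]
      have hm := h (valOf (mkInterp (fun n => if n = 0 then B else A) hg) A) (valOf_mem _ he₁)
        (fun γ hγ => by
          rw [Set.mem_singleton_iff] at hγ; subst hγ
          exact (valOf_iff _ _ _).mpr (le_refl A))
      rw [valOf_iff] at hm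
      have hcalc : ((A ⊓ B) ⊔ (A ⊓ Bᗮ)).topologicalClosure = (⊥ : Submodule ℂ H) := by
        rw [hA, hB, inf_span_eq_bot he₂ horth, inf_orth_eq_bot he₁ horth, sup_idem,
          IsClosed.submodule_topologicalClosure_eq hbotcl]
      have hm2 : A ≤ (⊥ : Submodule ℂ H) := by rw [← hcalc]; exact hm
      exact not_span_le_bot he₁ hm2
    obtain ⟨v6, hv6, hv6Γ, hv6f⟩ := witness _ _ hn6
    have h6a1 : v6 (Sentence.atom 1) = true := hv6Γ _ rfl
    have h6P : v6 (Sentence.conj (Sentence.atom 1) (Sentence.atom 0)) = false := by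
      cases h : v6 (Sentence.conj (Sentence.atom 1) (Sentence.atom 0)) with
      | false => rfl
      | true => rw [hdL v6 hv6 _ _ h] at hv6f; exact absurd hv6f (by simp)
    have h6Q : v6 (Sentence.conj (Sentence.atom 1) (Sentence.neg (Sentence.atom 0))) = false := by
      cases h : v6 (Sentence.conj (Sentence.atom 1) (Sentence.neg (Sentence.atom 0))) with
      | false => rfl
      | true => rw [hdR v6 hv6 _ _ h] at hv6f; exact absurd hv6f (by simp)
    have h6a0 : v6 (Sentence.atom 0) = false := by
      cases h : v6 (Sentence.atom 0) with
      | false => rfl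
      | true => rw [(hconj v6 hv6 _ _).mpr ⟨h6a1, h⟩] at h6P; exact absurd h6P (by simp)
    have h6na0 : v6 (Sentence.neg (Sentence.atom 0)) = false := by
      cases h : v6 (Sentence.neg (Sentence.atom 0)) with
      | false => rfl
      | true => rw [(hconj v6 hv6 _ _).mpr ⟨h6a1, h⟩] at h6Q; exact absurd h6Q (by simp)
    have hfff : f false false = true := by
      have h := hEM v6 hv6
      rw [hf v6 hv6, h6a0, h6na0] at h
      exact h
    rw [hf v6 hv6, h6P, h6Q, hfff] at hv6f
    exact absurd hv6f (by simp)
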